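/- Let F be a field, (a,b) ≠ (0,0) and (c,d) ≠ (0,0) in F², and set c₁ = (a,b,0,0), c₂ = (0,0,c,d) (the rows of a reduced cache matrix), and let t = (t₁,t₂,t₃,t₄) ∈ F⁴. If the cache recovers file A from t (i.e., e₀, e₁ ∈ span{c₁, c₂, t}), then the 2×2 matrix with rows (a,b) and (t₁,t₂) is invertible and (t₃,t₄) is a scalar multiple of (c,d). If the cache recovers file B from t (i.e., e₂, e₃ ∈ span{c₁, c₂, t}), then the 2×2 matrix with rows (c,d) and (t₃,t₄) is invertible and (t₁,t₂) is a scalar multiple of (a,b). -/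

import Mathlib

/-- Coordinates of `F⁴` correspond to the subfiles `A₀, A₁, B₀, B₁`.  A user with
cache rows `c1, c2` recovers file `A` from transmission `t` iff `e₀` and `e₁`
lie in the span of `{c1, c2, t}`. -/
def recoversA {F : Type*} [Field F] (c1 c2 t : Fin 4 → F) : Prop :=
  (Pi.single 0 1 : Fin 4 → F) ∈ Submodule.span F {c1, c2, t} ∧
  (Pi.single 1 1 : Fin 4 → F) ∈ Submodule.span F {c1, c2, t}

/-- A user with cache rows `c1, c2` recovers file `B` from transmission `t` iff
`e₂` and `e₃` lie in the span of `{c1, c2, t}`. -/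
def recoversB {F : Type*} [Field F] (c1 c2 t : Fin 4 → F) : Prop :=
  (Pi.single 2 1 : Fin 4 → F) ∈ Submodule.span F {c1, c2, t} ∧
  (Pi.single 3 1 : Fin 4 → F) ∈ Submodule.span F {c1, c2, t}

lemma fin_two_mul_eq_one_of_combinations {R : Type*} [Semiring R] {a b p q x z x' z' : R}
    (h₀ : x * a + z * p = 1) (h₁ : x * b + z * q = 0)
    (h₀' : x' * a + z' * p = 0) (h₁' : x' * b + z' * q = 1) :
    !![x, z; x', z'] * !![a, b; p, q] = 1 := by
  ext i j
  fin_cases i <;> fin_cases j <;> simp [Matrix.mul_apply, h₀, h₁, h₀', h₁']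

section CoefficientAlgebra

variable {F : Type*} [Field F]

lemma exists_eq_mul_of_mul_add_mul_eq_zero {c d r s y z : F} (hz : z ≠ 0)
    (hr : y * c + z * r = 0) (hs : y * d + z * s = 0) :
    ∃ μ : F, r = μ * c ∧ s = μ * d :=
  ⟨-y / z, by field_simp; linear_combination hr, by field_simp; linear_combination hs⟩

/-- The coefficient matrix `!![x, z; x', z']` is the inverse of `!![a, b; p, q]`, so `z` and `z'`
cannot both vanish; whichever does not exhibits `(r, s)` as a multiple of `(c, d)`. -/
lemma isUnit_and_exists_eq_mul_of_combinations {a b c d p q r s x y z x' y' z' : F}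
    (h₀ : x * a + z * p = 1) (h₁ : x * b + z * q = 0)
    (h₂ : y * c + z * r = 0) (h₃ : y * d + z * s = 0)
    (h₀' : x' * a + z' * p = 0) (h₁' : x' * b + z' * q = 1)
    (h₂' : y' * c + z' * r = 0) (h₃' : y' * d + z' * s = 0) :
    IsUnit !![a, b; p, q] ∧ ∃ μ : F, r = μ * c ∧ s = μ * d := by
  have hmul := fin_two_mul_eq_one_of_combinations h₀ h₁ h₀' h₁'
  have hcoef : x * z' - z * x' ≠ 0 := by
    have hdet := (Matrix.isUnit_iff_isUnit_det _).mp (IsUnit.of_mul_eq_one _ hmul)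
    rwa [Matrix.det_fin_two_of, isUnit_iff_ne_zero] at hdet
  refine ⟨IsUnit.of_mul_eq_one_right _ hmul, ?_⟩
  by_cases hz : z = 0
  · have hz' : z' ≠ 0 := by rintro rfl; simp [hz] at hcoef
    exact exists_eq_mul_of_mul_add_mul_eq_zero hz' h₂' h₃'
  · exact exists_eq_mul_of_mul_add_mul_eq_zero hz h₂ h₃

end CoefficientAlgebra

lemma exists_coords_of_mem_span {R : Type*} [Semiring R] {a b c d : R} {t v : Fin 4 → R}
    (h : v ∈ Submodule.span R {![a, b, 0, 0], ![0, 0, c, d], t}) :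
    ∃ x y z : R, x * a + z * t 0 = v 0 ∧ x * b + z * t 1 = v 1 ∧
      y * c + z * t 2 = v 2 ∧ y * d + z * t 3 = v 3 := by
  obtain ⟨x, y, z, rfl⟩ := Submodule.mem_span_triple.mp h
  exact ⟨x, y, z, by simp, by simp, by simp, by simp⟩

theorem recovery_constraints_general (F : Type*) [Field F] (a b c d : F) (t : Fin 4 → F) :
    (recoversA ![a, b, 0, 0] ![0, 0, c, d] t →
      IsUnit (!![a, b; t 0, t 1] : Matrix (Fin 2) (Fin 2) F) ∧
      ∃ μ : F, t 2 = μ * c ∧ t 3 = μ * d) ∧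
    (recoversB ![a, b, 0, 0] ![0, 0, c, d] t →
      IsUnit (!![c, d; t 2, t 3] : Matrix (Fin 2) (Fin 2) F) ∧
      ∃ μ : F, t 0 = μ * a ∧ t 1 = μ * b) := by
  constructor
  · rintro ⟨he₀, he₁⟩
    obtain ⟨x, y, z, h₀, h₁, h₂, h₃⟩ := exists_coords_of_mem_span he₀
    obtain ⟨x', y', z', h₀', h₁', h₂', h₃'⟩ := exists_coords_of_mem_span he₁
    simp only [Pi.single_eq_same, Pi.single_eq_of_ne, ne_eq, Fin.reduceEq, not_false_eq_true]
      at h₀ h₁ h₂ h₃ h₀' h₁' h₂' h₃'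
    exact isUnit_and_exists_eq_mul_of_combinations h₀ h₁ h₂ h₃ h₀' h₁' h₂' h₃'
  · rintro ⟨he₂, he₃⟩
    obtain ⟨x, y, z, h₀, h₁, h₂, h₃⟩ := exists_coords_of_mem_span he₂
    obtain ⟨x', y', z', h₀', h₁', h₂', h₃'⟩ := exists_coords_of_mem_span he₃
    simp only [Pi.single_eq_same, Pi.single_eq_of_ne, ne_eq, Fin.reduceEq, not_false_eq_true]
      at h₀ h₁ h₂ h₃ h₀' h₁' h₂' h₃'
    exact isUnit_and_exists_eq_mul_of_combinations h₂ h₃ h₀ h₁ h₂' h₃' h₀' h₁'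

/-- Constraints due to recovery for a reduced cache matrix with rows
`c₁ = (a,b,0,0)` and `c₂ = (0,0,c,d)` (with `(a,b) ≠ (0,0) ≠ (c,d)`): if the
cache recovers file `A` from `t`, then the 2×2 matrix with rows `(a,b)` and
`(t₁,t₂)` is invertible and `(t₃,t₄)` is a scalar multiple of `(c,d)`; if the
cache recovers file `B` from `t`, then the 2×2 matrix with rows `(c,d)` and
`(t₃,t₄)` is invertible and `(t₁,t₂)` is a scalar multiple of `(a,b)`. -/
theorem recovery_constraints (F : Type*) [Field F] (a b c d : F)
    (hab : (a, b) ≠ (0, 0)) (hcd : (c, d) ≠ (0, 0)) (t : Fin 4 → F) :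
    (recoversA ![a, b, 0, 0] ![0, 0, c, d] t →
      IsUnit (!![a, b; t 0, t 1] : Matrix (Fin 2) (Fin 2) F) ∧
      ∃ μ : F, t 2 = μ * c ∧ t 3 = μ * d) ∧
    (recoversB ![a, b, 0, 0] ![0, 0, c, d] t →
      IsUnit (!![c, d; t 2, t 3] : Matrix (Fin 2) (Fin 2) F) ∧
      ∃ μ : F, t 0 = μ * a ∧ t 1 = μ * b) :=
  recovery_constraints_general F a b c d t
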